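/- arXiv:1612.06226 — 5 statements merged into one kernel-verified Lean document; each statement's English description precedes it below -/
import Mathlib

section
/- The power series f(z) = Σ_{n=0}^∞ f_n z^n with f_n = (b^n/n!) Π_{k=0}^{n-1}(1 + (a/b)λ^k) has infinite radius of convergence, and the resulting entire function satisfies f'(z) = a f(λz) + b f(z) with f(0) = 1. -/
open Finset

private lemma panto_prod_bound (a b : ℂ) (lam : ℝ) (hlam0 : 0 < lam) (hlam1 : lam < 1) (n : ℕ) :
    ‖∏ k ∈ Finset.range n, (1 + a / b * (lam : ℂ) ^ k)‖ ≤ Real.exp (‖a / b‖ / (1 - lam)) := by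
  rw [norm_prod]
  calc ∏ k ∈ Finset.range n, ‖(1:ℂ) + a / b * (lam:ℂ) ^ k‖
      ≤ ∏ k ∈ Finset.range n, Real.exp (‖a/b‖ * lam ^ k) := by
        apply Finset.prod_le_prod (fun k _ => norm_nonneg _)
        intro k _
        have hn : ‖a / b * (lam:ℂ)^k‖ = ‖a/b‖ * lam ^ k := by
          rw [norm_mul, norm_pow, Complex.norm_real, Real.norm_of_nonneg hlam0.le]
        calc ‖(1:ℂ) + a/b*(lam:ℂ)^k‖ ≤ ‖(1:ℂ)‖ + ‖a/b*(lam:ℂ)^k‖ := norm_add_le _ _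
          _ = 1 + ‖a/b‖ * lam ^ k := by rw [norm_one, hn]
          _ ≤ Real.exp (‖a/b‖ * lam ^ k) := by
              have := Real.add_one_le_exp (‖a/b‖ * lam ^ k); linarith
    _ = Real.exp (∑ k ∈ Finset.range n, ‖a/b‖ * lam ^ k) := (Real.exp_sum _ _).symm
    _ ≤ Real.exp (‖a/b‖ / (1 - lam)) := by
        apply Real.exp_le_exp.mpr
        rw [← Finset.mul_sum]
        have hsum : ∑ k ∈ Finset.range n, lam ^ k ≤ 1 / (1 - lam) := by
          have h1 : ∑ k ∈ Finset.range n, lam ^ k ≤ ∑' k : ℕ, lam ^ k := by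
            apply Summable.sum_le_tsum _ (fun i _ => by positivity)
            exact summable_geometric_of_lt_one hlam0.le hlam1
          rwa [tsum_geometric_of_lt_one hlam0.le hlam1, inv_eq_one_div] at h1
        calc ‖a/b‖ * ∑ k ∈ Finset.range n, lam^k ≤ ‖a/b‖ * (1/(1-lam)) :=
              mul_le_mul_of_nonneg_left hsum (norm_nonneg _)
          _ = ‖a/b‖/(1-lam) := by ring

theorem pantograph_entire_solution (a b : ℂ) (hb : b ≠ 0)
    (lam : ℝ) (hlam0 : 0 < lam) (hlam1 : lam < 1)
    (f : ℂ → ℂ)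
    (hf : ∀ z : ℂ, f z = ∑' n : ℕ,
      (b ^ n / n.factorial * ∏ k ∈ Finset.range n, (1 + a / b * (lam : ℂ) ^ k)) * z ^ n) :
    (∀ z : ℂ, Summable (fun n : ℕ =>
      (b ^ n / n.factorial * ∏ k ∈ Finset.range n, (1 + a / b * (lam : ℂ) ^ k)) * z ^ n)) ∧
    f 0 = 1 ∧ ∀ z : ℂ, HasDerivAt f (a * f ((lam : ℂ) * z) + b * f z) z := by
  set c : ℕ → ℂ := fun n =>
    b ^ n / n.factorial * ∏ k ∈ Finset.range n, (1 + a / b * (lam : ℂ) ^ k) with hc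
  set A : ℝ := Real.exp (‖a / b‖ / (1 - lam)) with hA
  have hA0 : 0 < A := Real.exp_pos _
  -- coefficient norm bound
  have hcbound : ∀ n : ℕ, ‖c n‖ ≤ ‖b‖ ^ n / n.factorial * A := by
    intro n
    rw [hc, norm_mul]
    have h1 : ‖b ^ n / (n.factorial : ℂ)‖ = ‖b‖ ^ n / n.factorial := by
      rw [norm_div, norm_pow, RCLike.norm_natCast]
    rw [h1]
    exact mul_le_mul_of_nonneg_left (panto_prod_bound a b lam hlam0 hlam1 n) (by positivity)
  -- summability everywhere
  have hsummable : ∀ z : ℂ, Summable (fun n : ℕ => c n * z ^ n) := by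
    intro z
    apply Summable.of_norm
    apply Summable.of_nonneg_of_le (fun n => norm_nonneg _) ?_
      ((Real.summable_pow_div_factorial (‖b‖ * ‖z‖)).mul_left A)
    intro n
    calc ‖c n * z ^ n‖ = ‖c n‖ * ‖z‖ ^ n := by rw [norm_mul, norm_pow]
      _ ≤ (‖b‖ ^ n / n.factorial * A) * ‖z‖ ^ n :=
          mul_le_mul_of_nonneg_right (hcbound n) (by positivity)
      _ = A * ((‖b‖ * ‖z‖) ^ n / n.factorial) := by rw [mul_pow]; ring
  -- key recurrence
  have hrec : ∀ n : ℕ, ((n : ℂ) + 1) * c (n + 1) = (b + a * (lam:ℂ) ^ n) * c n := by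
    intro n
    rw [hc]
    simp only [Finset.prod_range_succ, Nat.factorial_succ, Nat.cast_mul, pow_succ]
    have h2 : ((n.factorial : ℂ)) ≠ 0 := Nat.cast_ne_zero.mpr n.factorial_ne_zero
    have h3 : ((n : ℂ) + 1) ≠ 0 := by
      exact_mod_cast (Nat.cast_ne_zero (R := ℂ)).mpr (Nat.succ_ne_zero n)
    push_cast
    field_simp
  refine ⟨hsummable, ?_, ?_⟩
  · -- f 0 = 1
    rw [hf 0]
    rw [tsum_eq_single 0 (fun n hn => by simp [zero_pow hn])]
    simp [hc]
  · -- derivative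
    intro z
    have hfe : f = fun w => ∑' n : ℕ, c n * w ^ n := funext hf
    set R : ℝ := ‖z‖ + 1 with hR
    have hR0 : 0 < R := by positivity
    set u : ℕ → ℝ := fun n => A * ‖b‖ * ((‖b‖ * R) ^ (n - 1) / (n - 1).factorial) with hu
    have hu_summable : Summable u := by
      rw [← summable_nat_add_iff 1]
      simpa [hu] using ((Real.summable_pow_div_factorial (‖b‖ * R)).mul_left (A * ‖b‖))
    have hbound : ∀ (n : ℕ) (w : ℂ), w ∈ Metric.ball (0:ℂ) R →
        ‖c n * ((n : ℂ) * w ^ (n - 1))‖ ≤ u n := by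
      intro n w hw
      have hwR : ‖w‖ ≤ R := le_of_lt (by simpa [Metric.mem_ball] using hw)
      match n with
      | 0 => simp [hu]; positivity
      | m + 1 =>
        have key : (‖b‖ ^ (m+1) / ((m+1).factorial) * A) * (((m:ℝ)+1) * R ^ m)
            = A * ‖b‖ * ((‖b‖ * R) ^ m / m.factorial) := by
          rw [Nat.factorial_succ, mul_pow]
          push_cast
          have h2 : ((m.factorial : ℝ)) ≠ 0 := Nat.cast_ne_zero.mpr m.factorial_ne_zero
          have h3 : ((m : ℝ) + 1) ≠ 0 := by positivity
          field_simp
          ring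
        rw [Nat.add_sub_cancel]
        have hnorm : ‖c (m+1) * (((m+1 : ℕ) : ℂ) * w ^ m)‖
            = ‖c (m+1)‖ * (((m:ℝ)+1) * ‖w‖ ^ m) := by
          rw [norm_mul (c (m+1)), norm_mul (((m+1 : ℕ) : ℂ)) (w ^ m), norm_pow,
            RCLike.norm_natCast]
          push_cast
          ring
        rw [hnorm]
        calc ‖c (m+1)‖ * (((m:ℝ)+1) * ‖w‖ ^ m)
            ≤ (‖b‖ ^ (m+1) / (m+1).factorial * A) * (((m:ℝ)+1) * R ^ m) := by
              apply mul_le_mul (hcbound _) ?_ (by positivity) (by positivity)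
              exact mul_le_mul_of_nonneg_left (pow_le_pow_left₀ (norm_nonneg _) hwR m)
                (by positivity)
          _ = u (m+1) := by
              simp only [hu, Nat.add_sub_cancel]
              rw [key]
    have hderiv : HasDerivAt (fun w => ∑' n : ℕ, c n * w ^ n)
        (∑' n : ℕ, c n * ((n : ℂ) * z ^ (n - 1))) z := by
      apply hasDerivAt_tsum_of_isPreconnected hu_summable Metric.isOpen_ball
        (convex_ball (0:ℂ) R).isPreconnected
        (fun n w _ => (hasDerivAt_pow n w).const_mul (c n))
        (fun n w hw => by
          simpa [mul_comm] using hbound n w hw)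
        (by simp [Metric.mem_ball, hR0]) (hsummable 0)
        (by simp [Metric.mem_ball, hR])
    have hsumderiv : Summable (fun n : ℕ => c n * ((n : ℂ) * z ^ (n - 1))) := by
      apply Summable.of_norm
      apply Summable.of_nonneg_of_le (fun n => norm_nonneg _)
        (fun n => hbound n z (by simp [Metric.mem_ball, hR])) hu_summable
    -- identify the derivative value
    have hval : (∑' n : ℕ, c n * ((n : ℂ) * z ^ (n - 1)))
        = a * (∑' n : ℕ, c n * ((lam : ℂ) * z) ^ n) + b * (∑' n : ℕ, c n * z ^ n) := by
      rw [Summable.tsum_eq_zero_add hsumderiv]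
      simp only [Nat.cast_zero, zero_mul, mul_zero, zero_add]
      rw [← tsum_mul_left, ← tsum_mul_left,
        ← Summable.tsum_add ((hsummable ((lam:ℂ) * z)).mul_left a) ((hsummable z).mul_left b)]
      apply tsum_congr
      intro n
      have h := hrec n
      rw [Nat.add_sub_cancel, mul_pow]
      push_cast
      linear_combination z ^ n * h
    rw [hfe]
    have hd2 := hderiv
    rw [hval] at hd2
    exact hd2
end

section
/- For each sufficiently large natural number k, the equation log x - log(log x) = (x₀ + k) log q has a solution x_k > e, and x_k / (k q^k) → q^{x₀} log q as k → ∞. -/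
/-!
Put `y = log x`. The equation reads `y - log y = c` with `c = (x₀ + k) log q`, so `y ≥ c → ∞`
and `y - c = log y = o(y)`: hence `y ~ c ~ k log q`. Exponentiating the equation gives
`x = y e^c = y q^{x₀} q^k`, so `x / (k q^k) = q^{x₀} · y / k → q^{x₀} log q`. Existence for
`c > 1` is the intermediate value theorem on `[e, e^{2c}]`.
-/

open Real Filter Topology Asymptotics

theorem log_two_mul_lt_self {c : ℝ} (hc : 1 ≤ c) : log (2 * c) < c := by
  rw [log_mul two_ne_zero (by positivity)]
  linarith [log_two_lt_d9, log_le_sub_one_of_pos (by positivity : 0 < c)]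

theorem exists_log_sub_log_log_eq {c : ℝ} (hc : 1 < c) :
    ∃ x, exp 1 < x ∧ log x - log (log x) = c := by
  have hcont : ContinuousOn (fun x => log x - log (log x)) (Set.Icc (exp 1) (exp (2 * c))) := by
    intro x hx
    have hlog : 1 ≤ log x := by rw [le_log_iff_exp_le (by linarith [exp_pos 1, hx.1])]; exact hx.1
    have hx0 : x ≠ 0 := by linarith [exp_pos 1, hx.1]
    exact ((continuousAt_log hx0).sub
      ((continuousAt_log (by linarith)).comp (continuousAt_log hx0))).continuousWithinAt
  have hmem : c ∈ Set.Ioc (log (exp 1) - log (log (exp 1)))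
      (log (exp (2 * c)) - log (log (exp (2 * c)))) := by
    simp only [log_exp, log_one, sub_zero]
    exact ⟨hc, by linarith [log_two_mul_lt_self hc.le]⟩
  obtain ⟨x, hx, hxc⟩ := intermediate_value_Ioc (exp_le_exp.2 (by linarith)) hcont hmem
  exact ⟨x, hx.1, hxc⟩

theorem le_log_of_log_sub_log_log_eq {x c : ℝ} (hx : exp 1 < x)
    (h : log x - log (log x) = c) : c ≤ log x := by
  have : 1 < log x := by rwa [lt_log_iff_exp_lt (by linarith [exp_pos 1])]
  linarith [log_pos this]

theorem eq_log_mul_exp_of_log_sub_log_log_eq {x c : ℝ} (hx : 1 < x)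
    (h : log x - log (log x) = c) : x = log x * exp c := by
  rw [← h, exp_sub, exp_log (by linarith), exp_log (log_pos hx)]
  field_simp [(log_pos hx).ne']

theorem exp_add_natCast_mul_log {q : ℝ} (hq : 0 < q) (a : ℝ) (k : ℕ) :
    exp ((a + k) * log q) = q ^ a * q ^ k := by
  rw [mul_comm, ← rpow_def_of_pos hq, rpow_add hq, rpow_natCast]

theorem tendsto_add_natCast_mul_div_natCast (a b : ℝ) :
    Tendsto (fun k : ℕ => (a + k) * b / k) atTop (𝓝 b) := by
  have h := ((tendsto_const_div_atTop_nhds_zero_nat a).add_const 1).mul_const b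
  rw [zero_add, one_mul] at h
  refine h.congr' ?_
  filter_upwards [eventually_ne_atTop 0] with k hk
  field_simp

theorem isEquivalent_sub_log {α : Type*} {l : Filter α} {u : α → ℝ} (hu : Tendsto u l atTop) :
    (fun a => u a - log (u a)) ~[l] u :=
  IsEquivalent.refl.sub_isLittleO (isLittleO_log_id_atTop.comp_tendsto hu)

theorem zeros_existence_and_limit_general (q x₀ : ℝ) (hq : 1 < q) :
    ∃ K : ℕ, ∃ x : ℕ → ℝ,
      (∀ k : ℕ, K ≤ k → Real.exp 1 < x k ∧
        Real.log (x k) - Real.log (Real.log (x k)) = (x₀ + k) * Real.log q) ∧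
      Filter.Tendsto (fun k : ℕ => x k / ((k : ℝ) * q ^ k)) Filter.atTop
        (nhds (q ^ x₀ * Real.log q)) := by
  set c : ℕ → ℝ := fun k => (x₀ + k) * log q
  have hc : Tendsto c atTop atTop :=
    (tendsto_atTop_add_const_left _ x₀ tendsto_natCast_atTop_atTop).atTop_mul_const (log_pos hq)
  choose! g hg using fun a (ha : 1 < a) => exists_log_sub_log_log_eq ha
  obtain ⟨K, hK⟩ := eventually_atTop.1 (hc.eventually_gt_atTop 1)
  refine ⟨K, fun k => g (c k), fun k hk => hg _ (hK k hk), ?_⟩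
  have hsol : ∀ᶠ k in atTop, exp 1 < g (c k) ∧ log (g (c k)) - log (log (g (c k))) = c k :=
    eventually_atTop.2 ⟨K, fun k hk => hg _ (hK k hk)⟩
  have hlog : (fun k => log (g (c k))) ~[atTop] c := by
    have hu : Tendsto (fun k => log (g (c k))) atTop atTop :=
      tendsto_atTop_mono' _ (hsol.mono fun k hk => le_log_of_log_sub_log_log_eq hk.1 hk.2) hc
    exact ((isEquivalent_sub_log hu).congr_left (hsol.mono fun k hk => hk.2)).symm
  have hratio : Tendsto (fun k : ℕ => log (g (c k)) / k) atTop (𝓝 (log q)) :=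
    (hlog.div IsEquivalent.refl).symm.tendsto_nhds (tendsto_add_natCast_mul_div_natCast x₀ _)
  refine (hratio.const_mul (q ^ x₀)).congr' ?_
  filter_upwards [hsol, eventually_ne_atTop 0] with k hk hk0
  have hx : 1 < g (c k) := (one_lt_exp_iff.2 one_pos).trans hk.1
  conv_rhs => rw [eq_log_mul_exp_of_log_sub_log_log_eq hx hk.2,
    exp_add_natCast_mul_log (by linarith) x₀ k]
  field_simp

theorem zeros_existence_and_limit (q x₀ : ℝ) (hq : 1 < q) (hx₀ : 0 < x₀) :
    ∃ K : ℕ, ∃ x : ℕ → ℝ,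
      (∀ k : ℕ, K ≤ k → Real.exp 1 < x k ∧
        Real.log (x k) - Real.log (Real.log (x k)) = (x₀ + k) * Real.log q) ∧
      Filter.Tendsto (fun k : ℕ => x k / ((k : ℝ) * q ^ k)) Filter.atTop
        (nhds (q ^ x₀ * Real.log q)) :=
  zeros_existence_and_limit_general q x₀ hq
end

section
/- Poisson summation for the theta-type series: for 0 < λ < 1 and y ∈ ℝ, Σ_{n∈ℤ} (-1)^n exp((1/2)(n-y)² log λ) = √(2π/(-log λ)) · Σ_{k∈ℤ} exp((2k+1)²π²/(2 log λ)) · exp(iπ(2k+1)y). -/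
/-!
The sign `(-1)^n = e^{iπn}` is a character twist of the Gaussian `e^{-π a (x - y)^2}` with
`a = -log λ / 2π`. Poisson summation (Mathlib's `Complex.tsum_exp_neg_quadratic`) turns a twist
by frequency `θ` into a shift of the dual lattice by `θ`, so `θ = 1/2` leaves only the odd
frequencies `2k + 1`, and the shift by `y` becomes the phase `e^{iπ(2k+1)y}`.
-/

open Complex
open scoped Real

theorem Complex.tsum_exp_neg_quadratic_shift {a : ℂ} (ha : 0 < a.re) (y θ : ℂ) :
    ∑' n : ℤ, cexp (-π * a * (n - y) ^ 2 + 2 * π * I * θ * n) =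
      1 / a ^ (1 / 2 : ℂ) *
        ∑' k : ℤ, cexp (-π / a * (k - θ) ^ 2 + 2 * π * I * (θ - k) * y) := by
  have ha0 : a ≠ 0 := fun h => by simp [h] at ha
  set c := cexp (-π * a * y ^ 2)
  calc ∑' n : ℤ, cexp (-π * a * (n - y) ^ 2 + 2 * π * I * θ * n)
      = c * ∑' n : ℤ, cexp (-π * a * n ^ 2 + 2 * π * (a * y + I * θ) * n) := by
        rw [← tsum_mul_left]
        exact tsum_congr fun n => by rw [← exp_add]; ring_nf
    _ = 1 / a ^ (1 / 2 : ℂ) *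
          ∑' k : ℤ, c * cexp (-π / a * (k + I * (a * y + I * θ)) ^ 2) := by
        rw [tsum_exp_neg_quadratic ha, tsum_mul_left]
        ring
    _ = _ := by
        congr 1
        refine tsum_congr fun k => ?_
        rw [← exp_add]
        congr 1
        field_simp
        linear_combination
          (-(a ^ 2 * y ^ 2) - θ ^ 2 * (I ^ 2 - 1) - 2 * k * θ - 2 * a * y * θ * I) * I_sq

lemma one_div_ofReal_cpow_one_half {a : ℝ} (ha : 0 ≤ a) :
    1 / (a : ℂ) ^ (1 / 2 : ℂ) = (√(1 / a) : ℂ) := by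
  rw [← ofReal_one, ← ofReal_ofNat, ← ofReal_div, ← ofReal_cpow ha, ← ofReal_div,
    Real.sqrt_eq_rpow, one_div a, Real.inv_rpow ha, one_div]

theorem poisson_summation_theta (lam : ℝ) (hlam0 : 0 < lam) (hlam1 : lam < 1) (y : ℝ) :
    ((∑' n : ℤ, (-1 : ℝ) ^ n * Real.exp ((1/2) * ((n : ℝ) - y) ^ 2 * Real.log lam) : ℝ) : ℂ) =
      (Real.sqrt (2 * Real.pi / (-Real.log lam)) : ℂ) *
        ∑' k : ℤ, (Real.exp ((2 * (k : ℝ) + 1) ^ 2 * Real.pi ^ 2 / (2 * Real.log lam)) : ℂ) *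
          Complex.exp (Real.pi * (2 * (k : ℝ) + 1) * y * Complex.I) := by
  set a : ℝ := -Real.log lam / (2 * π)
  have ha : 0 < a := div_pos (neg_pos.2 (Real.log_neg hlam0 hlam1)) (by positivity)
  have hlhs :
      ((∑' n : ℤ, (-1 : ℝ) ^ n * Real.exp ((1/2) * ((n : ℝ) - y) ^ 2 * Real.log lam) : ℝ) : ℂ) =
        ∑' n : ℤ, cexp (-π * a * (n - y) ^ 2 + 2 * π * I * (1 / 2) * n) := by
    rw [ofReal_tsum]
    refine tsum_congr fun n => ?_
    push_cast
    rw [← exp_pi_mul_I, ← exp_int_mul, ← exp_add]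
    simp only [a]
    push_cast
    field_simp
    congr 1
    ring
  have hrhs : ∑' k : ℤ, cexp (-π / a * (k - 1 / 2) ^ 2 + 2 * π * I * (1 / 2 - k) * y)
      = ∑' k : ℤ, (Real.exp ((2 * (k : ℝ) + 1) ^ 2 * π ^ 2 / (2 * Real.log lam)) : ℂ) *
          cexp (π * (2 * (k : ℝ) + 1) * y * I) := by
    rw [← (Equiv.neg ℤ).tsum_eq]
    refine tsum_congr fun k => ?_
    rw [ofReal_exp, ← exp_add]
    simp only [a, Equiv.neg_apply]
    push_cast
    field_simp
    congr 1
    ring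
  rw [hlhs, tsum_exp_neg_quadratic_shift (by simpa using ha), one_div_ofReal_cpow_one_half ha.le,
    hrhs, one_div_div]
end

section
/- If y : ℂ → ℂ is an entire function of order zero and y is not identically zero, then y is unbounded on every ray {re^{iθ} : r ≥ 0} emanating from the origin, unless y is constant. -/
open Complex Set Bornology

theorem order_zero_unbounded_on_rays (y : ℂ → ℂ) (hy : Differentiable ℂ y)
    (horder : ∀ ε : ℝ, 0 < ε → ∃ C : ℝ, ∀ z : ℂ, ‖y z‖ ≤ C * Real.exp (‖z‖ ^ ε))
    (hne : y ≠ 0) :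
    (∃ c : ℂ, ∀ z : ℂ, y z = c) ∨
      ∀ θ : ℝ, ∀ M : ℝ, ∃ r : ℝ, 0 ≤ r ∧
        M < ‖y ((r : ℂ) * Complex.exp ((θ : ℂ) * Complex.I))‖ := by
  by_cases hconst : ∃ c : ℂ, ∀ z : ℂ, y z = c
  · exact Or.inl hconst
  right
  intro θ M
  by_contra hb
  push_neg at hb
  -- `hb : ∀ r, 0 ≤ r → ‖y (r * exp (θ I))‖ ≤ M`
  apply hconst
  set e : ℂ := Complex.exp ((θ : ℂ) * Complex.I) with he
  set G : ℂ → ℂ := fun w => y (w ^ 4 * e) with hG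
  have hGd : Differentiable ℂ G := hy.comp ((differentiable_pow 4).mul_const e)
  -- boundary bounds
  have habs_e : ‖e‖ = 1 := by
    rw [he, Complex.norm_exp]
    simp
  have hre : ∀ x : ℝ, ‖G (x : ℂ)‖ ≤ M := by
    intro x
    have : ((x : ℂ)) ^ 4 * e = ((x ^ 4 : ℝ) : ℂ) * e := by push_cast; ring
    rw [hG]; simp only [this]
    exact hb (x ^ 4) (by positivity)
  have him : ∀ x : ℝ, ‖G ((x : ℂ) * Complex.I)‖ ≤ M := by
    intro x
    have : ((x : ℂ) * Complex.I) ^ 4 * e = ((x ^ 4 : ℝ) : ℂ) * e := by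
      have : (Complex.I) ^ 4 = 1 := by
        simp [pow_succ, Complex.I_mul_I]
      push_cast
      rw [mul_pow, this]
      ring
    rw [hG]; simp only [this]
    exact hb (x ^ 4) (by positivity)
  -- growth bound of order 1
  obtain ⟨C, hC⟩ := horder (1/4) (by norm_num)
  have hBO : ∀ (l : Filter ℂ), G =O[l] fun w => Real.exp (1 * ‖w‖ ^ (1 : ℝ)) := by
    intro l
    apply Asymptotics.IsBigO.of_bound C
    filter_upwards with w
    have h1 : ‖w ^ 4 * e‖ = ‖w‖ ^ 4 := by
      rw [norm_mul, norm_pow]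
      simp only [habs_e, mul_one]
    have h2 : (‖w ^ 4 * e‖ : ℝ) ^ ((1:ℝ)/4) = ‖w‖ := by
      rw [h1, ← Real.rpow_natCast (‖w‖) 4, ← Real.rpow_mul (norm_nonneg w)]
      norm_num
    have := hC (w ^ 4 * e)
    rw [h2] at this
    calc ‖G w‖ ≤ C * Real.exp ‖w‖ := this
      _ ≤ C * ‖Real.exp (1 * ‖w‖ ^ (1:ℝ))‖ := by
          rw [Real.norm_eq_abs, abs_of_pos (Real.exp_pos _), one_mul, Real.rpow_one]
  have hexp : ∀ (s : Set ℂ), ∃ c < (2:ℝ), ∃ B, G =O[Bornology.cobounded ℂ ⊓ Filter.principal s]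
      fun w => Real.exp (B * ‖w‖ ^ c) :=
    fun s => ⟨1, by norm_num, 1, hBO _⟩
  -- bounded everywhere via Phragmen-Lindelof in four quadrants
  have hbd : ∀ z : ℂ, ‖G z‖ ≤ M := by
    intro z
    rcases le_total 0 z.re with h1 | h1 <;> rcases le_total 0 z.im with h2 | h2
    · exact PhragmenLindelof.quadrant_I hGd.diffContOnCl (hexp _)
        (fun x _ => hre x) (fun x _ => him x) h1 h2
    · exact PhragmenLindelof.quadrant_IV hGd.diffContOnCl (hexp _)
        (fun x _ => hre x) (fun x _ => him x) h1 h2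
    · exact PhragmenLindelof.quadrant_II hGd.diffContOnCl (hexp _)
        (fun x _ => hre x) (fun x _ => him x) h1 h2
    · exact PhragmenLindelof.quadrant_III hGd.diffContOnCl (hexp _)
        (fun x _ => hre x) (fun x _ => him x) h1 h2
  -- Liouville: G constant
  have hbdd : IsBounded (Set.range G) := by
    apply (isBounded_iff_forall_norm_le).2 ⟨M, ?_⟩
    rintro _ ⟨w, rfl⟩
    exact hbd w
  refine ⟨y 0, fun z => ?_⟩
  have he0 : e ≠ 0 := Complex.exp_ne_zero _
  obtain ⟨w, hw⟩ := IsAlgClosed.exists_pow_nat_eq (k := ℂ) (z / e) (n := 4) (by norm_num)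
  have hz : w ^ 4 * e = z := by rw [hw]; field_simp
  calc y z = G w := by rw [hG]; simp [hz]
    _ = G 0 := hGd.apply_eq_apply_of_bounded hbdd w 0
    _ = y 0 := by rw [hG]; norm_num
end

section
/- For 0 < λ < 1, a, b ∈ ℂ, b ≠ 0, and (a/b)λ^n ≠ -1 for all n: f(z) = Q_λ(a/b) Σ_{n=0}^∞ (bz)^n / (n! Q_λ((a/b)λ^n)) defines an entire function (the series converges for all z when |a/b| < 1) satisfying f'(z) = a f(λz) + b f(z) and f(0) = 1. -/
/-!
The functional equation `Q α = (1 + α) Q (α λ)` of the infinite product turns the coefficients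
`c n = b ^ n / (n! Q (q λ ^ n))`, `q = a / b`, into a solution of the recurrence
`(n + 1) c (n + 1) = (b + a λ ^ n) c n`, which is the pantograph equation `f' = a f (λ ·) + b f`
read off coefficientwise. The same recurrence bounds `‖c n‖` by `‖c 0‖ (‖a‖ + ‖b‖) ^ n / n!`, so
the series is entire and may be differentiated term by term.
-/

section QProduct

variable {𝕜 : Type*} [NormedField 𝕜] {q : 𝕜}

theorem summable_norm_mul_pow (hq : ‖q‖ < 1) (α : 𝕜) : Summable fun k : ℕ => ‖α * q ^ k‖ := by
  simpa only [norm_mul, norm_pow] using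
    (summable_geometric_of_lt_one (norm_nonneg q) hq).mul_left ‖α‖

theorem multipliable_one_add_mul_pow [CompleteSpace 𝕜] (hq : ‖q‖ < 1) (α : 𝕜) :
    Multipliable fun k : ℕ => 1 + α * q ^ k :=
  multipliable_one_add_of_summable (summable_norm_mul_pow hq α)

theorem tprod_one_add_mul_pow_ne_zero [CompleteSpace 𝕜] (hq : ‖q‖ < 1) {α : 𝕜}
    (hα : ∀ k : ℕ, 1 + α * q ^ k ≠ 0) :
    ∏' k : ℕ, (1 + α * q ^ k) ≠ 0 :=
  tprod_one_add_ne_zero_of_summable hα (summable_norm_mul_pow hq α)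

theorem tprod_one_add_mul_pow_eq [CompleteSpace 𝕜] (hq : ‖q‖ < 1) (α : 𝕜) :
    ∏' k : ℕ, (1 + α * q ^ k) = (1 + α) * ∏' k : ℕ, (1 + α * q * q ^ k) := by
  have hshift : (fun k : ℕ => 1 + α * q ^ (k + 1)) = fun k => 1 + α * q * q ^ k := by
    funext k; ring
  rw [tprod_eq_zero_mul' (by rw [hshift]; exact multipliable_one_add_mul_pow hq (α * q)), hshift,
    pow_zero, mul_one]

end QProduct

section PowerSeries

variable {𝕜 : Type*} [RCLike 𝕜] {c : ℕ → 𝕜} {K : ℝ}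

theorem norm_le_mul_pow_div_factorial (hK : 0 ≤ K)
    (hc : ∀ n : ℕ, (n + 1) * ‖c (n + 1)‖ ≤ K * ‖c n‖) (n : ℕ) :
    ‖c n‖ ≤ ‖c 0‖ * K ^ n / n.factorial := by
  induction n with
  | zero => simp
  | succ n ih =>
    rw [Nat.factorial_succ, Nat.cast_mul, Nat.cast_succ, pow_succ,
      le_div_iff₀ (by positivity)]
    calc ‖c (n + 1)‖ * ((n + 1) * n.factorial) = (n + 1) * ‖c (n + 1)‖ * n.factorial := by ring
      _ ≤ K * ‖c n‖ * n.factorial := by gcongr ?_ * _; exact hc n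
      _ ≤ K * (‖c 0‖ * K ^ n / n.factorial) * n.factorial := by gcongr
      _ = ‖c 0‖ * (K ^ n * K) := by field_simp

theorem summable_norm_mul_pow_of_succ_mul_norm_le (hK : 0 ≤ K)
    (hc : ∀ n : ℕ, (n + 1) * ‖c (n + 1)‖ ≤ K * ‖c n‖) {r : ℝ} (hr : 0 ≤ r) :
    Summable fun n => ‖c n‖ * r ^ n := by
  refine .of_nonneg_of_le (fun n => by positivity) (fun n => ?_)
    ((Real.summable_pow_div_factorial (K * r)).mul_left ‖c 0‖)
  calc ‖c n‖ * r ^ n ≤ ‖c 0‖ * K ^ n / n.factorial * r ^ n := by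
        gcongr; exact norm_le_mul_pow_div_factorial hK hc n
    _ = ‖c 0‖ * ((K * r) ^ n / n.factorial) := by ring

theorem summable_mul_pow_of_succ_mul_norm_le (hK : 0 ≤ K)
    (hc : ∀ n : ℕ, (n + 1) * ‖c (n + 1)‖ ≤ K * ‖c n‖) (z : 𝕜) :
    Summable fun n => c n * z ^ n :=
  .of_norm <| by
    simpa only [norm_mul, norm_pow] using
      summable_norm_mul_pow_of_succ_mul_norm_le hK hc (norm_nonneg z)

theorem hasDerivAt_tsum_mul_pow_of_succ_mul_norm_le (hK : 0 ≤ K)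
    (hc : ∀ n : ℕ, (n + 1) * ‖c (n + 1)‖ ≤ K * ‖c n‖) (z : 𝕜) :
    HasDerivAt (fun w => ∑' n, c n * w ^ n) (∑' n, (n + 1) * c (n + 1) * z ^ n) z := by
  set R := ‖z‖ + 1
  set u : ℕ → ℝ := fun n => ‖c n‖ * n * R ^ (n - 1)
  have hu : Summable u := by
    refine (summable_nat_add_iff 1).mp <| .of_nonneg_of_le (fun n => by positivity) (fun n => ?_)
      ((summable_norm_mul_pow_of_succ_mul_norm_le hK hc (r := R) (by positivity)).mul_left K)
    calc u (n + 1) = (n + 1) * ‖c (n + 1)‖ * R ^ n := by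
          simp only [u, Nat.add_sub_cancel]; push_cast; ring
      _ ≤ K * ‖c n‖ * R ^ n := by gcongr ?_ * _; exact hc n
      _ = K * (‖c n‖ * R ^ n) := by ring
  have hbound : ∀ n (y : 𝕜), y ∈ Metric.ball 0 R → ‖c n * (n * y ^ (n - 1))‖ ≤ u n := by
    intro n y hy
    rw [mem_ball_zero_iff] at hy
    simp only [norm_mul, norm_pow, RCLike.norm_natCast, u]
    rw [mul_assoc]
    gcongr
  have hz : z ∈ Metric.ball 0 R := mem_ball_zero_iff.mpr (lt_add_one _)
  have hderiv := hasDerivAt_tsum_of_isPreconnected hu Metric.isOpen_ball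
    (convex_ball (0 : 𝕜) R).isPreconnected
    (fun n y _ => (hasDerivAt_pow n y).const_mul (c n)) hbound
    (Metric.mem_ball_self (by positivity)) (summable_mul_pow_of_succ_mul_norm_le hK hc 0) hz
  rw [(Summable.of_norm_bounded hu fun n => hbound n z hz).tsum_eq_zero_add] at hderiv
  refine hderiv.congr_deriv ?_
  simp only [Nat.cast_zero, zero_mul, mul_zero, zero_add, Nat.add_sub_cancel, Nat.cast_succ]
  exact tsum_congr fun n => by ring

theorem succ_mul_norm_le_of_pantograph {a b lam : 𝕜} (hlam : ‖lam‖ ≤ 1)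
    (hc : ∀ n : ℕ, (n + 1) * c (n + 1) = (b + a * lam ^ n) * c n) (n : ℕ) :
    (n + 1) * ‖c (n + 1)‖ ≤ (‖b‖ + ‖a‖) * ‖c n‖ := by
  have hnorm := congrArg norm (hc n)
  rw [norm_mul, norm_mul, ← Nat.cast_succ, RCLike.norm_natCast, Nat.cast_succ] at hnorm
  rw [hnorm]
  gcongr
  calc ‖b + a * lam ^ n‖ ≤ ‖b‖ + ‖a‖ * ‖lam‖ ^ n := by
        simpa only [norm_mul, norm_pow] using norm_add_le b (a * lam ^ n)
    _ ≤ ‖b‖ + ‖a‖ := by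
        gcongr ‖b‖ + ?_
        exact mul_le_of_le_one_right (norm_nonneg a) (pow_le_one₀ (norm_nonneg lam) hlam)

theorem hasDerivAt_tsum_mul_pow_of_pantograph {a b lam : 𝕜} (hlam : ‖lam‖ ≤ 1)
    (hc : ∀ n : ℕ, (n + 1) * c (n + 1) = (b + a * lam ^ n) * c n) (z : 𝕜) :
    HasDerivAt (fun w => ∑' n, c n * w ^ n)
      (a * ∑' n, c n * (lam * z) ^ n + b * ∑' n, c n * z ^ n) z := by
  have hratio := succ_mul_norm_le_of_pantograph hlam hc
  have hK : 0 ≤ ‖b‖ + ‖a‖ := by positivity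
  refine (hasDerivAt_tsum_mul_pow_of_succ_mul_norm_le hK hratio z).congr_deriv ?_
  rw [← tsum_mul_left, ← tsum_mul_left,
    ← ((summable_mul_pow_of_succ_mul_norm_le hK hratio (lam * z)).mul_left a).tsum_add
      ((summable_mul_pow_of_succ_mul_norm_le hK hratio z).mul_left b)]
  exact tsum_congr fun n => by rw [hc n, mul_pow]; ring

end PowerSeries

theorem succ_mul_pow_div_factorial_mul {𝕜 : Type*} [Field 𝕜] [CharZero 𝕜] {P r : ℕ → 𝕜}
    (hP : ∀ n, P n = (1 + r n) * P (n + 1)) (hP0 : ∀ n, P n ≠ 0) (b : 𝕜) (n : ℕ) :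
    (n + 1) * (b ^ (n + 1) / ((n + 1).factorial * P (n + 1))) =
      b * (1 + r n) * (b ^ n / (n.factorial * P n)) := by
  have hn : (n + 1 : 𝕜) ≠ 0 := Nat.cast_add_one_ne_zero n
  have hP_succ := hP0 (n + 1)
  have hr : 1 + r n ≠ 0 := left_ne_zero_of_mul (hP n ▸ hP0 n)
  rw [hP n, Nat.factorial_succ, Nat.cast_mul, Nat.cast_succ]
  field_simp
  ring

theorem pantograph_Q_series_solution_general (a b : ℂ) (hb : b ≠ 0)
    (lam : ℝ) (hlam0 : 0 < lam) (hlam1 : lam < 1)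
    (hnotpoly : ∀ n : ℕ, a / b * (lam : ℂ) ^ n ≠ -1)
    (Q : ℂ → ℂ) (hQ : ∀ α : ℂ, Q α = ∏' k : ℕ, (1 + α * (lam : ℂ) ^ k))
    (f : ℂ → ℂ)
    (hf : ∀ z : ℂ, f z = Q (a / b) *
      ∑' n : ℕ, (b * z) ^ n / (n.factorial * Q (a / b * (lam : ℂ) ^ n))) :
    (∀ z : ℂ, Summable (fun n : ℕ => (b * z) ^ n / (n.factorial * Q (a / b * (lam : ℂ) ^ n)))) ∧
    f 0 = 1 ∧ ∀ z : ℂ, HasDerivAt f (a * f ((lam : ℂ) * z) + b * f z) z := by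
  set q := a / b with hq
  have hlam : ‖(lam : ℂ)‖ < 1 := by
    rwa [Complex.norm_real, Real.norm_of_nonneg hlam0.le]
  have hQ_succ (n : ℕ) : Q (q * lam ^ n) = (1 + q * lam ^ n) * Q (q * lam ^ (n + 1)) := by
    rw [hQ, hQ, tprod_one_add_mul_pow_eq hlam, pow_succ, mul_assoc]
  have hQ_ne (n : ℕ) : Q (q * lam ^ n) ≠ 0 := by
    rw [hQ]
    refine tprod_one_add_mul_pow_ne_zero hlam fun k h => hnotpoly (n + k) ?_
    rw [pow_add, ← mul_assoc]
    exact eq_neg_of_add_eq_zero_right h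
  set c : ℕ → ℂ := fun n => b ^ n / (n.factorial * Q (q * lam ^ n))
  have hc (n : ℕ) : (n + 1) * c (n + 1) = (b + a * lam ^ n) * c n := by
    rw [succ_mul_pow_div_factorial_mul hQ_succ hQ_ne b n, hq]
    congr 1
    field_simp
  have hterm (z : ℂ) (n : ℕ) : (b * z) ^ n / (n.factorial * Q (q * lam ^ n)) = c n * z ^ n := by
    rw [mul_pow]; ring
  have hf_eq : f = fun w => Q q * ∑' n, c n * w ^ n := by
    funext w; rw [hf]; simp_rw [hterm]
  have hlam_le : ‖(lam : ℂ)‖ ≤ 1 := hlam.le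
  refine ⟨fun z => ?_, ?_, fun z => ?_⟩
  · simpa only [hterm] using summable_mul_pow_of_succ_mul_norm_le (by positivity)
      (succ_mul_norm_le_of_pantograph hlam_le hc) z
  · simp only [hf_eq]
    rw [tsum_eq_single 0 fun n hn => by rw [zero_pow hn, mul_zero]]
    simpa [c] using mul_inv_cancel₀ (by simpa using hQ_ne 0)
  · rw [hf_eq]
    simpa only [mul_add, mul_left_comm (Q q)] using
      (hasDerivAt_tsum_mul_pow_of_pantograph hlam_le hc z).const_mul (Q q)

theorem pantograph_Q_series_solution (a b : ℂ) (hb : b ≠ 0)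
    (lam : ℝ) (hlam0 : 0 < lam) (hlam1 : lam < 1)
    (hnotpoly : ∀ n : ℕ, a / b * (lam : ℂ) ^ n ≠ -1)
    (hab : ‖a / b‖ < 1)
    (Q : ℂ → ℂ) (hQ : ∀ α : ℂ, Q α = ∏' k : ℕ, (1 + α * (lam : ℂ) ^ k))
    (f : ℂ → ℂ)
    (hf : ∀ z : ℂ, f z = Q (a / b) *
      ∑' n : ℕ, (b * z) ^ n / (n.factorial * Q (a / b * (lam : ℂ) ^ n))) :
    (∀ z : ℂ, Summable (fun n : ℕ => (b * z) ^ n / (n.factorial * Q (a / b * (lam : ℂ) ^ n)))) ∧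
    f 0 = 1 ∧ ∀ z : ℂ, HasDerivAt f (a * f ((lam : ℂ) * z) + b * f z) z :=
  pantograph_Q_series_solution_general a b hb lam hlam0 hlam1 hnotpoly Q hQ f hf
end
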